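/- Transfer lemma: let φ be the Thue–Morse morphism and k ≥ 1. For all nonempty words u, v, v' with |v| = |v'|, φ^{k-1}(u) · φ^k(v) ∼_k φ^k(v') · φ^{k-1}(u). -/

import Mathlib

/-- Number of occurrences of the second word as a (scattered) subword of the first. -/
def binom {α : Type*} [DecidableEq α] : List α → List α → ℕ
  | _, [] => 1
  | [], _ :: _ => 0
  | a :: u, b :: v => binom u (b :: v) + if a = b then binom u v else 0

/-- k-binomial equivalence. -/
def BinEq (k : ℕ) (u v : List Bool) : Prop :=
  ∀ x : List Bool, x.length ≤ k → binom u x = binom v x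

/-- The Thue–Morse word: `tm n` is the parity of the number of ones
in the binary expansion of `n` (`false` plays the role of the letter 0). -/
def tm (n : ℕ) : Bool := (Nat.digits 2 n).count 1 % 2 == 1

/-- `u` occurs as a (contiguous) factor of the Thue–Morse word. -/
def isFactorTM (u : List Bool) : Prop :=
  ∃ i : ℕ, u = (List.range u.length).map (fun j => tm (i + j))

/-- The Thue–Morse morphism φ(0)=01, φ(1)=10, extended to words. -/
def phiW (w : List Bool) : List Bool :=
  w.flatMap (fun a => if a then [true, false] else [false, true])

/-!
The proof rests on the expansion
`binom (φ u) x = C(|u|, |x|) + ∑ binom u y`, the sum running over a multiset of words `y` shorter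
than `x` that depends on `x` only. Hence `u ∼_k v` with `|u| = |v|` gives `φ u ∼_(k+1) φ v`, and
iterating `k - 1` times from `u · φ v ∼_1 φ v' · u` (both sides have `|u| + |v|` letters of each
kind) yields the transfer lemma, since `φ` commutes with concatenation.
-/

theorem binom_nil_right {α : Type*} [DecidableEq α] (u : List α) : binom u [] = 1 := by
  cases u <;> rfl

theorem binom_cons_cons {α : Type*} [DecidableEq α] (a b : α) (u v : List α) :
    binom (a :: u) (b :: v) = binom u (b :: v) + if a = b then binom u v else 0 := rfl

theorem binom_nil_cons {α : Type*} [DecidableEq α] (b : α) (v : List α) :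
    binom [] (b :: v) = 0 := rfl

theorem binom_singleton {α : Type*} [DecidableEq α] (u : List α) (c : α) :
    binom u [c] = u.count c := by
  induction u with
  | nil => rfl
  | cons a u ih => simp [binom_cons_cons, binom_nil_right, ih, List.count_cons]

theorem sum_map_binom_cons_map_cons {α : Type*} [DecidableEq α] (b d : α) (u : List α)
    (P : List (List α)) :
    ((P.map (d :: ·)).map (binom (b :: u))).sum
      = ((P.map (d :: ·)).map (binom u)).sum + if b = d then (P.map (binom u)).sum else 0 := by
  induction P with
  | nil => simp
  | cons y P ih =>
    simp only [List.map_cons, List.sum_cons, binom_cons_cons, ih]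
    split_ifs <;> ring

theorem binEq_zero (u v : List Bool) : BinEq 0 u v := by
  intro x hx
  rw [List.length_eq_zero_iff.mp (Nat.le_zero.mp hx), binom_nil_right, binom_nil_right]

def boolWords : ℕ → List (List Bool)
  | 0 => [[]]
  | n + 1 => (boolWords n).map (false :: ·) ++ (boolWords n).map (true :: ·)

theorem sum_boolWords_binom (u : List Bool) (m : ℕ) :
    ((boolWords m).map (binom u)).sum = u.length.choose m := by
  induction u generalizing m with
  | nil => cases m <;> simp [boolWords, binom_nil_right, binom_nil_cons, Function.comp_def]
  | cons b u ih =>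
    cases m with
    | zero => simp [boolWords, binom_nil_right]
    | succ m =>
      have h := ih (m + 1)
      simp only [boolWords, List.map_append, List.sum_append] at h ⊢
      simp only [sum_map_binom_cons_map_cons, ih m, List.length_cons, Nat.choose_succ_succ', ← h]
      cases b <;> simp <;> omega

theorem length_of_mem_boolWords {m : ℕ} {y : List Bool} (hy : y ∈ boolWords m) :
    y.length = m := by
  induction m generalizing y with
  | zero => simp_all [boolWords]
  | succ m ih =>
    simp only [boolWords, List.mem_append, List.mem_map] at hy
    rcases hy with ⟨y, hy, rfl⟩ | ⟨y, hy, rfl⟩ <;> simp [ih hy]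

theorem length_phiW (w : List Bool) : (phiW w).length = 2 * w.length := by
  induction w with
  | nil => rfl
  | cons a w ih => cases a <;> simp [phiW] at ih ⊢ <;> omega

theorem phiW_cons (b : Bool) (u : List Bool) : phiW (b :: u) = b :: (!b) :: phiW u := by
  cases b <;> rfl

theorem phiW_append (u v : List Bool) : phiW (u ++ v) = phiW u ++ phiW v :=
  List.flatMap_append

/-- An occurrence of `x` in `phiW u` taking at most one letter from each block `phiW [a]` is a
choice of `x.length` blocks, whence the term `u.length.choose x.length` in `binom_phiW`; the
occurrences that take a whole block `a (!a)` are counted by the `binom u y`, `y ∈ phiLowerTerms x`. -/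
def phiLowerTerms : List Bool → List (List Bool)
  | [] => []
  | [_] => []
  | a :: c :: x =>
      (phiLowerTerms (c :: x)).map (false :: ·) ++ (phiLowerTerms (c :: x)).map (true :: ·) ++
        if c = !a then (boolWords x.length ++ phiLowerTerms x).map (a :: ·) else []

theorem length_lt_of_mem_phiLowerTerms {x y : List Bool} (hy : y ∈ phiLowerTerms x) :
    y.length < x.length := by
  induction x using phiLowerTerms.induct generalizing y with
  | case1 | case2 => simp [phiLowerTerms] at hy
  | case3 a c x ih₁ ih₂ =>
    simp only [phiLowerTerms, List.mem_append, List.mem_map] at hy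
    rcases hy with (⟨y, hy, rfl⟩ | ⟨y, hy, rfl⟩) | hy
    · simpa using ih₁ hy
    · simpa using ih₁ hy
    · split_ifs at hy
      · simp only [List.mem_map, List.mem_append] at hy
        obtain ⟨y, hy | hy, rfl⟩ := hy
        · simp [length_of_mem_boolWords hy]
        · simpa using (ih₂ hy).le
      · simp at hy

theorem binom_phiW (u x : List Bool) :
    binom (phiW u) x = u.length.choose x.length + ((phiLowerTerms x).map (binom u)).sum := by
  induction u generalizing x with
  | nil =>
    match x with
    | [] => rfl
    | [a] => rfl
    | a :: c :: x => simp [phiLowerTerms, binom_nil_cons, Function.comp_def, phiW, apply_ite]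
  | cons b u ih =>
    rw [phiW_cons]
    match x with
    | [] => simp [binom_nil_right, phiLowerTerms]
    | [a] =>
      have := ih [a]
      cases a <;> cases b <;> simp_all [binom_cons_cons, binom_nil_right, phiLowerTerms]
    | a :: c :: x =>
      simp only [binom_cons_cons, ih, phiLowerTerms, List.length_cons, Nat.choose_succ_succ',
        List.map_append, List.sum_append, sum_map_binom_cons_map_cons]
      by_cases hca : c = !a
      · simp only [hca, ↓reduceIte, List.map_append, List.sum_append, sum_map_binom_cons_map_cons,
          sum_boolWords_binom]
        cases a <;> cases b <;> simp <;> omega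
      · simp only [hca, ↓reduceIte, List.map_nil, List.sum_nil]
        cases a <;> cases b <;> cases c <;> simp_all <;> omega

theorem binEq_phiW {k : ℕ} {u v : List Bool} (hlen : u.length = v.length) (h : BinEq k u v) :
    BinEq (k + 1) (phiW u) (phiW v) := by
  intro x hx
  rw [binom_phiW, binom_phiW, hlen]
  congr 1
  refine congrArg List.sum (List.map_congr_left fun y hy => h y ?_)
  have := length_lt_of_mem_phiLowerTerms hy
  omega

theorem binEq_iterate_phiW {k : ℕ} {u v : List Bool} (hlen : u.length = v.length)
    (h : BinEq k u v) (j : ℕ) : BinEq (k + j) (phiW^[j] u) (phiW^[j] v) := by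
  induction j generalizing k u v with
  | zero => exact h
  | succ j ih =>
    rw [Function.iterate_succ_apply, Function.iterate_succ_apply, ← add_assoc, add_right_comm]
    exact ih (by rw [length_phiW, length_phiW, hlen]) (binEq_phiW hlen h)

theorem binEq_one_append_phiW (u : List Bool) {v v' : List Bool}
    (hlen : v.length = v'.length) : BinEq 1 (u ++ phiW v) (phiW v' ++ u) := by
  have count_phiW (w : List Bool) (c : Bool) : (phiW w).count c = w.length := by
    simpa [binom_singleton, phiLowerTerms] using binom_phiW w [c]
  intro x hx
  match x with
  | [] => rw [binom_nil_right, binom_nil_right]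
  | [c] => simp only [binom_singleton, List.count_append, count_phiW, hlen, add_comm]
  | _ :: _ :: _ => simp at hx

theorem transfer_lemma_general (k : ℕ) (u v v' : List Bool) (hlen : v.length = v'.length) :
    BinEq k (phiW^[k - 1] u ++ phiW^[k] v) (phiW^[k] v' ++ phiW^[k - 1] u) := by
  cases k with
  | zero => exact binEq_zero _ _
  | succ j =>
    have hlen' : (u ++ phiW v).length = (phiW v' ++ u).length := by
      simp [length_phiW, hlen, add_comm]
    have := binEq_iterate_phiW hlen' (binEq_one_append_phiW u hlen) j
    rwa [Function.Semiconj₂.iterate phiW_append, Function.Semiconj₂.iterate phiW_append,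
      ← Function.iterate_succ_apply, ← Function.iterate_succ_apply, add_comm] at this

theorem transfer_lemma (k : ℕ) (hk : 1 ≤ k) (u v v' : List Bool)
    (hu : u ≠ []) (hv : v ≠ []) (hv' : v' ≠ []) (hlen : v.length = v'.length) :
    BinEq k (phiW^[k - 1] u ++ phiW^[k] v) (phiW^[k] v' ++ phiW^[k - 1] u) :=
  transfer_lemma_general k u v v' hlen
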